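/- arXiv:1906.06032 — 2 statements merged into one kernel-verified Lean document; each statement's English description precedes it below -/
import Mathlib

section
/- Let f*(x) = E[Y | X = x] be the minimizer of the standard population squared loss, and suppose f* is invariant on perturbation sets: f*(x̃) = f*(x) for all x̃ ∈ B(x), where x ∈ B(x) for all x. Then for any measurable f, E[sup_{x̃ ∈ B(x)}(f(x̃) - y)²] ≥ E[sup_{x̃ ∈ B(x)}(f*(x̃) - y)²]; i.e., f* also minimizes the robust population squared loss. -/
/-!
The Bayes estimator `f* ∘ X` is the conditional expectation `E[Y | X]`, i.e. the orthogonal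
projection of `Y` onto the `L²` functions of `X`; hence it minimizes the standard squared loss.
Since `x ∈ B x`, the robust loss of any `f` dominates its standard loss, while invariance of `f*`
on `B x` makes the robust loss of `f*` equal to its standard loss.
-/

open MeasureTheory

lemma le_cbiSup_of_mem {α β : Type*} [ConditionallyCompleteLattice β] {s : Set α} {φ : α → β}
    (hφ : BddAbove (φ '' s)) {x : α} (hx : x ∈ s) : φ x ≤ ⨆ z ∈ s, φ z :=
  le_ciSup₂ (f := fun z (_ : z ∈ s) => φ z)
    (hφ.mono <| Set.iUnion_subset fun _ =>
      Set.range_subset_iff.2 fun hz => Set.mem_image_of_mem φ hz) x hx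

lemma Real.biSup_eq_of_forall_mem_eq {α : Type*} {s : Set α} {φ : α → ℝ} {x : α}
    (hx : x ∈ s) (hφ : ∀ z ∈ s, φ z = φ x) (h0 : 0 ≤ φ x) : ⨆ z ∈ s, φ z = φ x := by
  -- for `z ∉ s` the inner supremum is the junk value `sSup ∅ = 0`
  refine le_antisymm (Real.iSup_le (fun z => Real.iSup_le (fun hz => (hφ z hz).le) h0) h0) ?_
  refine le_cbiSup_of_mem ⟨φ x, ?_⟩ hx
  rintro _ ⟨z, hz, rfl⟩
  exact (hφ z hz).le

section ConditionalExpectation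

variable {Ω : Type*} {m m₀ : MeasurableSpace Ω} {μ : Measure Ω} [IsFiniteMeasure μ]
  {Y h : Ω → ℝ}

lemma integral_mul_condExp_sub_eq_zero (hm : m ≤ m₀) (hY : MemLp Y 2 μ)
    (hh : AEStronglyMeasurable[m] h μ) (hh2 : MemLp h 2 μ) :
    ∫ ω, h ω * (μ[Y|m] ω - Y ω) ∂μ = 0 := by
  have hhY : Integrable (fun ω => h ω * Y ω) μ := hh2.integrable_mul hY
  have hhc : Integrable (fun ω => h ω * μ[Y|m] ω) μ :=
    hh2.integrable_mul (hY.condExp one_le_two)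
  have hpull : ∫ ω, h ω * Y ω ∂μ = ∫ ω, h ω * μ[Y|m] ω ∂μ := by
    have := isFiniteMeasure_trim (μ := μ) hm
    rw [← integral_condExp hm]
    exact integral_congr_ae (condExp_mul_of_aestronglyMeasurable_left hh hhY
      (hY.integrable one_le_two))
  simp_rw [mul_sub, integral_sub hhc hhY, hpull, sub_self]

lemma integral_sq_condExp_sub_le (hm : m ≤ m₀) (hY : MemLp Y 2 μ)
    {g : Ω → ℝ} (hg : AEStronglyMeasurable[m] g μ) (hg2 : MemLp g 2 μ) :
    ∫ ω, (μ[Y|m] ω - Y ω) ^ 2 ∂μ ≤ ∫ ω, (g ω - Y ω) ^ 2 ∂μ := by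
  set c := μ[Y|m]
  have hc2 : MemLp c 2 μ := hY.condExp one_le_two
  have hh : AEStronglyMeasurable[m] (g - c) μ :=
    hg.sub stronglyMeasurable_condExp.aestronglyMeasurable
  have hh2 : MemLp (g - c) 2 μ := hg2.sub hc2
  have hsq : Integrable (fun ω => (g - c) ω ^ 2) μ := hh2.integrable_sq
  have hcross : Integrable (fun ω => 2 * ((g - c) ω * (c ω - Y ω))) μ :=
    (hh2.integrable_mul (hc2.sub hY)).const_mul 2
  have hcY : Integrable (fun ω => (c ω - Y ω) ^ 2) μ := (hc2.sub hY).integrable_sq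
  have hexpand : (fun ω => (g ω - Y ω) ^ 2) =
      fun ω => ((g - c) ω ^ 2 + 2 * ((g - c) ω * (c ω - Y ω))) + (c ω - Y ω) ^ 2 := by
    funext ω
    simp only [Pi.sub_apply]
    ring
  have hsum : Integrable (fun ω => (g - c) ω ^ 2 + 2 * ((g - c) ω * (c ω - Y ω))) μ :=
    hsq.add hcross
  rw [hexpand, integral_add hsum hcY, integral_add hsq hcross, integral_const_mul,
    integral_mul_condExp_sub_eq_zero hm hY hh hh2]
  have : 0 ≤ ∫ ω, (g - c) ω ^ 2 ∂μ := integral_nonneg fun ω => sq_nonneg _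
  linarith

end ConditionalExpectation

theorem stmt_3_general {Ω 𝒳 : Type*} [MeasurableSpace Ω] [MeasurableSpace 𝒳]
    (μ : Measure Ω) [IsProbabilityMeasure μ]
    (X : Ω → 𝒳) (hX : Measurable X)
    (Y : Ω → ℝ) (hY : MemLp Y 2 μ)
    (B : 𝒳 → Set 𝒳) (hB : ∀ x, x ∈ B x)
    (fstar : 𝒳 → ℝ)
    (hfstar : (fun ω => fstar (X ω)) =ᵐ[μ] μ[Y | MeasurableSpace.comap X inferInstance])
    (hinv : ∀ x, ∀ z ∈ B x, fstar z = fstar x)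
    (f : 𝒳 → ℝ) (hf : Measurable f) (hfX : MemLp (fun ω => f (X ω)) 2 μ)
    (hBdd : ∀ (x : 𝒳) (y : ℝ), BddAbove ((fun z => (f z - y) ^ 2) '' B x))
    (hInt : Integrable (fun ω => ⨆ z ∈ B (X ω), (f z - Y ω) ^ 2) μ) :
    ∫ ω, ⨆ z ∈ B (X ω), (fstar z - Y ω) ^ 2 ∂μ
      ≤ ∫ ω, ⨆ z ∈ B (X ω), (f z - Y ω) ^ 2 ∂μ := by
  have hfX_meas :
      AEStronglyMeasurable[MeasurableSpace.comap X inferInstance] (fun ω => f (X ω)) μ :=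
    (hf.comp (comap_measurable X)).aestronglyMeasurable
  calc ∫ ω, ⨆ z ∈ B (X ω), (fstar z - Y ω) ^ 2 ∂μ
      = ∫ ω, (fstar (X ω) - Y ω) ^ 2 ∂μ := by
        congr with ω
        exact Real.biSup_eq_of_forall_mem_eq (hB (X ω)) (fun z hz => by rw [hinv _ z hz])
          (sq_nonneg _)
    _ = ∫ ω, (μ[Y | MeasurableSpace.comap X inferInstance] ω - Y ω) ^ 2 ∂μ :=
        integral_congr_ae (hfstar.mono fun ω hω => by simp only [← hω])
    _ ≤ ∫ ω, (f (X ω) - Y ω) ^ 2 ∂μ :=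
        integral_sq_condExp_sub_le hX.comap_le hY hfX_meas hfX
    _ ≤ ∫ ω, ⨆ z ∈ B (X ω), (f z - Y ω) ^ 2 ∂μ :=
        integral_mono (hfX.sub hY).integrable_sq hInt
          fun ω => le_cbiSup_of_mem (hBdd (X ω) (Y ω)) (hB (X ω))

/-- Theorem 1 (regression): if the Bayes regression function `fstar` is invariant on the
perturbation sets `B x`, it also minimizes the robust population squared loss. -/
theorem stmt_3 {Ω 𝒳 : Type*} [MeasurableSpace Ω] [MeasurableSpace 𝒳]
    (μ : Measure Ω) [IsProbabilityMeasure μ]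
    (X : Ω → 𝒳) (hX : Measurable X)
    (Y : Ω → ℝ) (hY : MemLp Y 2 μ)
    (B : 𝒳 → Set 𝒳) (hB : ∀ x, x ∈ B x)
    (fstar : 𝒳 → ℝ) (hfstar_meas : Measurable fstar)
    (hfstar : (fun ω => fstar (X ω)) =ᵐ[μ] μ[Y | MeasurableSpace.comap X inferInstance])
    (hinv : ∀ x, ∀ z ∈ B x, fstar z = fstar x)
    (f : 𝒳 → ℝ) (hf : Measurable f) (hfX : MemLp (fun ω => f (X ω)) 2 μ)
    (hBdd : ∀ (x : 𝒳) (y : ℝ), BddAbove ((fun z => (f z - y) ^ 2) '' B x))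
    (hInt : Integrable (fun ω => ⨆ z ∈ B (X ω), (f z - Y ω) ^ 2) μ) :
    ∫ ω, ⨆ z ∈ B (X ω), (fstar z - Y ω) ^ 2 ∂μ
      ≤ ∫ ω, ⨆ z ∈ B (X ω), (f z - Y ω) ^ 2 ∂μ :=
  stmt_3_general μ X hX Y hY B hB fstar hfstar hinv f hf hfX hBdd hInt
end

section
/- In the staircase setting with Y = m⌊X⌉ + σV, V ~ N(0,1) independent of X, the staircase predictor f*(x) = m⌊x⌉ achieves both standard population squared loss and robust population squared loss equal to σ², and this is the minimum possible value of each over all measurable predictors. -/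
/-! The residual `f(X) - Y` splits as `g(X) - σV` with `g = f - m⌊·⌉`. As `g(X)` is independent
of the centred noise `σV`, the cross term vanishes and the loss is `E[g(X)²] + σ² ≥ σ²`, with
equality for `g = 0`, i.e. for `f*`. Every point of `B(x)` rounds to `⌊x⌉`, so `f*` is constant on
`B(x)` and its robust loss is `σ²` as well, while the robust loss of any `f` dominates the standard
loss of `f ∘ ⌊·⌉`. -/

open MeasureTheory ProbabilityTheory

@[fun_prop]
theorem measurable_round {R : Type*} [Field R] [LinearOrder R] [IsStrictOrderedRing R]
    [FloorRing R] [TopologicalSpace R] [OrderTopology R] [MeasurableSpace R]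
    [OpensMeasurableSpace R] [MeasurableAdd R] : Measurable (round : R → ℤ) := by
  rw [show (round : R → ℤ) = fun x => ⌊x + 1 / 2⌋ from funext round_eq]
  exact Int.measurable_floor.comp (measurable_add_const _)

theorem round_eq_of_abs_sub_lt {R : Type*} [Field R] [LinearOrder R] [IsStrictOrderedRing R]
    [FloorRing R] {z : R} {r : ℤ} (h : |z - r| < 1 / 2) : round z = r := by
  rw [round_eq_iff]
  constructor <;> linarith [abs_lt.1 h]

theorem round_eq_of_mem_insert {R : Type*} [Field R] [LinearOrder R] [IsStrictOrderedRing R]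
    [FloorRing R] {ε : R} (hε : |ε| < 1 / 2) {r : ℤ} {z : R}
    (hz : z ∈ ({(r : R) - ε, (r : R), (r : R) + ε} : Set R)) : round z = r := by
  have hdist : |z - r| ≤ |ε| := by
    rcases hz with rfl | rfl | rfl <;> simp
  exact round_eq_of_abs_sub_lt (hdist.trans_lt hε)

lemma Real.le_biSup_of_bddAbove {s : Set ℝ} {F : ℝ → ℝ} (hF : BddAbove (F '' s)) {a : ℝ}
    (ha : a ∈ s) : F a ≤ ⨆ z ∈ s, F z :=
  le_ciSup₂ (f := fun z (_ : z ∈ s) => F z)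
    (hF.mono <| Set.iUnion_subset fun _ => Set.range_subset_iff.2 (Set.mem_image_of_mem F)) a ha

-- `0 ≤ c` is needed because an empty inner supremum is `sSup ∅ = 0`.
lemma Real.biSup_eq_of_forall_eq {s : Set ℝ} (hs : s.Nonempty) {F : ℝ → ℝ} {c : ℝ} (hc : 0 ≤ c)
    (hF : ∀ z ∈ s, F z = c) : ⨆ z ∈ s, F z = c := by
  obtain ⟨a, ha⟩ := hs
  refine le_antisymm (Real.iSup_le (fun z => Real.iSup_le (fun hz => (hF z hz).le) hc) hc) ?_
  have hbdd : BddAbove (F '' s) := ⟨c, by rintro _ ⟨z, hz, rfl⟩; exact (hF z hz).le⟩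
  exact (hF a ha).symm.le.trans (Real.le_biSup_of_bddAbove hbdd ha)

namespace ProbabilityTheory

variable {Ω : Type*} [MeasurableSpace Ω] {μ : Measure Ω} {V : Ω → ℝ}

lemma HasLaw.integral_eq_of_gaussianReal {m : ℝ} {v : NNReal}
    (hV : HasLaw V (gaussianReal m v) μ) : μ[V] = m := by
  rw [hV.integral_eq, integral_id_gaussianReal]

lemma HasLaw.memLp_of_gaussianReal {m : ℝ} {v : NNReal} (hV : HasLaw V (gaussianReal m v) μ)
    (p : NNReal) : MemLp V p μ := by
  rw [← Function.id_comp V, ← memLp_map_measure_iff (by fun_prop) hV.aemeasurable, hV.map_eq]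
  exact memLp_id_gaussianReal p

lemma HasLaw.integral_mul_sq_of_gaussianReal {v : NNReal} (hV : HasLaw V (gaussianReal 0 v) μ)
    (σ : ℝ) : ∫ ω, (σ * V ω) ^ 2 ∂μ = σ ^ 2 * v := by
  simp_rw [mul_pow]
  rw [integral_const_mul, ← variance_of_integral_eq_zero hV.aemeasurable
    hV.integral_eq_of_gaussianReal, hV.variance_eq, variance_id_gaussianReal]

end ProbabilityTheory

section

variable {Ω : Type*} [MeasurableSpace Ω] {μ : Measure Ω}

lemma integral_sq_le_integral_sub_sq_of_indepFun {W V : Ω → ℝ} (hW : AEStronglyMeasurable W μ)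
    (hV : MemLp V 2 μ) (hWV : IndepFun W V μ) (hV0 : μ[V] = 0)
    (hint : Integrable (fun ω => (W ω - V ω) ^ 2) μ) :
    ∫ ω, V ω ^ 2 ∂μ ≤ ∫ ω, (W ω - V ω) ^ 2 ∂μ := by
  have hW2 : MemLp W 2 μ := by
    simpa using ((memLp_two_iff_integrable_sq (hW.sub hV.1)).2 hint).add hV
  have hcross : ∫ ω, W ω * V ω ∂μ = 0 := by
    rw [hWV.integral_fun_mul_eq_mul_integral hW hV.1, hV0, mul_zero]
  have hWV2 : Integrable (fun ω => 2 * (W ω * V ω)) μ := (hW2.integrable_mul hV).const_mul 2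
  have hexpand : ∫ ω, (W ω - V ω) ^ 2 ∂μ
      = ∫ ω, W ω ^ 2 ∂μ - 2 * ∫ ω, W ω * V ω ∂μ + ∫ ω, V ω ^ 2 ∂μ := by
    simp_rw [sub_sq, mul_assoc]
    rw [integral_add (f := fun ω => W ω ^ 2 - 2 * (W ω * V ω))
      (hW2.integrable_sq.sub hWV2) hV.integrable_sq, integral_sub hW2.integrable_sq hWV2,
      integral_const_mul]
  nlinarith [integral_nonneg (μ := μ) (f := fun ω => W ω ^ 2) fun ω => sq_nonneg (W ω)]

lemma sq_le_integral_sq_sub_of_indepFun_gaussianReal {X V Y : Ω → ℝ} (hX : Measurable X)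
    (hV : HasLaw V (gaussianReal 0 1) μ) (hXV : IndepFun X V μ) {h : ℝ → ℝ} (hh : Measurable h)
    {σ : ℝ} (hY : ∀ ω, Y ω = h (X ω) + σ * V ω) {f : ℝ → ℝ} (hf : Measurable f)
    (hint : Integrable (fun ω => (f (X ω) - Y ω) ^ 2) μ) :
    σ ^ 2 ≤ ∫ ω, (f (X ω) - Y ω) ^ 2 ∂μ := by
  have hsplit : ∀ ω, f (X ω) - Y ω = (f - h) (X ω) - σ * V ω := fun ω => by
    rw [hY, Pi.sub_apply]; ring
  have hmean : μ[fun ω => σ * V ω] = 0 := by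
    rw [integral_const_mul, hV.integral_eq_of_gaussianReal, mul_zero]
  simp_rw [hsplit] at hint ⊢
  calc σ ^ 2 = ∫ ω, (σ * V ω) ^ 2 ∂μ := by simpa using (hV.integral_mul_sq_of_gaussianReal σ).symm
    _ ≤ _ := integral_sq_le_integral_sub_sq_of_indepFun ((hf.sub hh).comp hX).aestronglyMeasurable
      ((hV.memLp_of_gaussianReal 2).const_mul σ) (hXV.comp (hf.sub hh) (measurable_const_mul σ))
      hmean hint

end

theorem stmt_11_general {Ω : Type*} [MeasurableSpace Ω] (μ : Measure Ω)
    (X V : Ω → ℝ) (hX : Measurable X) (hV : Measurable V)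
    (hVdist : Measure.map V μ = gaussianReal 0 1)
    (hindep : IndepFun X V μ)
    (m σ ε : ℝ) (hε : ε ∈ Set.Ioo 0 (1 / 2 : ℝ))
    (Y : Ω → ℝ) (hY : ∀ ω, Y ω = m * (round (X ω) : ℝ) + σ * V ω)
    (B : ℝ → Set ℝ)
    (hB : ∀ x, B x = {((round x : ℤ) : ℝ) - ε, ((round x : ℤ) : ℝ), ((round x : ℤ) : ℝ) + ε})
    (fstar : ℝ → ℝ) (hfstar : ∀ x, fstar x = m * (round x : ℝ)) :
    (∫ ω, (fstar (X ω) - Y ω) ^ 2 ∂μ = σ ^ 2) ∧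
    (∫ ω, ⨆ z ∈ B (X ω), (fstar z - Y ω) ^ 2 ∂μ = σ ^ 2) ∧
    (∀ f : ℝ → ℝ, Measurable f →
      Integrable (fun ω => (f (X ω) - Y ω) ^ 2) μ →
      σ ^ 2 ≤ ∫ ω, (f (X ω) - Y ω) ^ 2 ∂μ) ∧
    (∀ f : ℝ → ℝ, Measurable f →
      Integrable (fun ω => ⨆ z ∈ B (X ω), (f z - Y ω) ^ 2) μ →
      (∀ (x : ℝ) (y : ℝ), BddAbove ((fun z => (f z - y) ^ 2) '' B x)) →
      σ ^ 2 ≤ ∫ ω, ⨆ z ∈ B (X ω), (f z - Y ω) ^ 2 ∂μ) := by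
  have hVlaw : HasLaw V (gaussianReal 0 1) μ := ⟨hV.aemeasurable, hVdist⟩
  have hnoise : ∫ ω, (σ * V ω) ^ 2 ∂μ = σ ^ 2 := by
    simpa using hVlaw.integral_mul_sq_of_gaussianReal σ
  have hYmeas : Measurable Y := by
    rw [show Y = _ from funext hY]; fun_prop
  have hmem (x : ℝ) : (round x : ℝ) ∈ B x := by simp [hB]
  have hround {x z : ℝ} (hz : z ∈ B x) : round z = round x :=
    round_eq_of_mem_insert (abs_lt.2 ⟨by linarith [hε.1], hε.2⟩) (hB x ▸ hz)
  have hstd (f : ℝ → ℝ) (hf : Measurable f) := sq_le_integral_sq_sub_of_indepFun_gaussianReal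
    hX hVlaw hindep (h := fun x => m * round x) (by fun_prop) hY hf
  refine ⟨?_, ?_, hstd, ?_⟩
  · have hloss (ω : Ω) : (fstar (X ω) - Y ω) ^ 2 = (σ * V ω) ^ 2 := by
      rw [hfstar, hY]; ring
    simp_rw [hloss, hnoise]
  · have hloss (ω : Ω) : ⨆ z ∈ B (X ω), (fstar z - Y ω) ^ 2 = (σ * V ω) ^ 2 :=
      Real.biSup_eq_of_forall_eq ⟨_, hmem _⟩ (sq_nonneg _) fun z hz => by
        rw [hfstar, hround hz, hY]; ring
    simp_rw [hloss, hnoise]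
  · intro f hf hint hbdd
    have hle (ω : Ω) : (f (round (X ω)) - Y ω) ^ 2 ≤ ⨆ z ∈ B (X ω), (f z - Y ω) ^ 2 :=
      Real.le_biSup_of_bddAbove (hbdd _ _) (hmem _)
    have hint_round : Integrable (fun ω => (f (round (X ω)) - Y ω) ^ 2) μ :=
      hint.mono' (by fun_prop : Measurable _).aestronglyMeasurable
        (ae_of_all _ fun ω => (Real.norm_of_nonneg (sq_nonneg _)).trans_le (hle ω))
    exact (hstd (fun x => f (round x)) (by fun_prop) hint_round).trans
      (integral_mono hint_round hint hle)

/-- The staircase predictor `fstar x = m * round x` achieves standard and robust population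
squared loss `σ²`, and `σ²` is the minimum value of both objectives over all measurable
predictors. -/
theorem stmt_11 {Ω : Type*} [MeasurableSpace Ω] (μ : Measure Ω) [IsProbabilityMeasure μ]
    (X V : Ω → ℝ) (hX : Measurable X) (hV : Measurable V)
    (hVdist : Measure.map V μ = gaussianReal 0 1)
    (hindep : IndepFun X V μ)
    (m σ ε : ℝ) (hε : ε ∈ Set.Ioo 0 (1 / 2 : ℝ))
    (hsupp : ∀ᵐ ω ∂μ, ∃ k : ℤ, X ω = k ∨ X ω = k - ε ∨ X ω = k + ε)
    (Y : Ω → ℝ) (hY : ∀ ω, Y ω = m * (round (X ω) : ℝ) + σ * V ω)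
    (B : ℝ → Set ℝ)
    (hB : ∀ x, B x = {((round x : ℤ) : ℝ) - ε, ((round x : ℤ) : ℝ), ((round x : ℤ) : ℝ) + ε})
    (fstar : ℝ → ℝ) (hfstar : ∀ x, fstar x = m * (round x : ℝ)) :
    (∫ ω, (fstar (X ω) - Y ω) ^ 2 ∂μ = σ ^ 2) ∧
    (∫ ω, ⨆ z ∈ B (X ω), (fstar z - Y ω) ^ 2 ∂μ = σ ^ 2) ∧
    (∀ f : ℝ → ℝ, Measurable f →
      Integrable (fun ω => (f (X ω) - Y ω) ^ 2) μ →
      σ ^ 2 ≤ ∫ ω, (f (X ω) - Y ω) ^ 2 ∂μ) ∧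
    (∀ f : ℝ → ℝ, Measurable f →
      Integrable (fun ω => ⨆ z ∈ B (X ω), (f z - Y ω) ^ 2) μ →
      (∀ (x : ℝ) (y : ℝ), BddAbove ((fun z => (f z - y) ^ 2) '' B x)) →
      σ ^ 2 ≤ ∫ ω, ⨆ z ∈ B (X ω), (f z - Y ω) ^ 2 ∂μ) :=
  stmt_11_general μ X V hX hV hVdist hindep m σ ε hε Y hY B hB fstar hfstar
end
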